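/- arXiv:0807.3210 — 8 statements merged into one kernel-verified Lean document; each statement's English description precedes it below -/
import Mathlib

section
/- Let X be an mm-space and let κ, κ' > 0 with κ > κ'. Then ObsDiam_ℝ(X; −κ') ≥ Sep(X; κ, κ). -/
/-! Given Borel sets `A`, `B` of measure at least `κ`, the distance function `f = d(·, A)` is
1-Lipschitz. Any set of `f_*μ`-measure at least `m - κ'` pulls back to a set of measure greater
than `m - κ`, which therefore meets both `A` and `B`; on `A` the function `f` vanishes and on `B`
it is at least `d(A, B)`, so that set has diameter at least `d(A, B)`. -/

open MeasureTheory Metric Set Filter Topology ENNReal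

noncomputable section

/-- The extended distance `d(A,B)` between two subsets of an (extended) metric space. -/
def setEDist {X : Type*} [PseudoEMetricSpace X] (A B : Set X) : ℝ≥0∞ :=
  ⨅ (x ∈ A) (y ∈ B), edist x y

/-- The partial diameter `diam(ν, ν(X) − κ)`: the infimum of the diameters of Borel
subsets of measure at least `ν(X) − κ`. -/
def partialDiam {X : Type*} [PseudoEMetricSpace X] [MeasurableSpace X]
    (ν : Measure X) (κ : ℝ≥0∞) : ℝ≥0∞ :=
  ⨅ (A : Set X) (_ : MeasurableSet A) (_ : ν univ - κ ≤ ν A), EMetric.diam A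

/-- The separation distance `Sep(ν; κ₁, κ₂)`: the supremum of `d(A,B)` over Borel sets
`A, B` with `ν(A) ≥ κ₁` and `ν(B) ≥ κ₂`. -/
def sepDist {X : Type*} [PseudoEMetricSpace X] [MeasurableSpace X]
    (ν : Measure X) (κ₁ κ₂ : ℝ≥0∞) : ℝ≥0∞ :=
  ⨆ (A : Set X) (B : Set X) (_ : MeasurableSet A) (_ : MeasurableSet B)
    (_ : κ₁ ≤ ν A) (_ : κ₂ ≤ ν B), setEDist A B

/-- The observable diameter `ObsDiam_Y(X; −κ)`. -/
def obsDiam (Y : Type*) [PseudoEMetricSpace Y] [MeasurableSpace Y]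
    {X : Type*} [PseudoEMetricSpace X] [MeasurableSpace X]
    (μ : Measure X) (κ : ℝ≥0∞) : ℝ≥0∞ :=
  ⨆ (f : X → Y) (_ : LipschitzWith 1 f), partialDiam (Measure.map f μ) κ

/-- A sequence of mm-spaces is a Lévy family if its observable diameters (viewed in `ℝ`)
tend to zero for every `κ > 0`. -/
def IsLevyFamily (X : ℕ → Type*) [∀ n, PseudoEMetricSpace (X n)]
    [∀ n, MeasurableSpace (X n)] (μ : ∀ n, Measure (X n)) : Prop :=
  ∀ κ : ℝ≥0∞, 0 < κ → Tendsto (fun n => obsDiam ℝ (μ n) κ) atTop (nhds 0)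

lemma setEDist_le_infEDist {X : Type*} [PseudoEMetricSpace X] {A B : Set X} {y : X}
    (hy : y ∈ B) : setEDist A B ≤ infEDist y A :=
  le_iInf₂ fun a ha => calc
    setEDist A B ≤ edist a y := (iInf₂_le a ha).trans (iInf₂_le y hy)
    _ = edist y a := edist_comm a y

lemma setEDist_le_edist_infDist {X : Type*} [PseudoMetricSpace X] {A B : Set X} {x y : X}
    (hx : x ∈ A) (hy : y ∈ B) : setEDist A B ≤ edist (infDist x A) (infDist y A) := by
  have hne : infEDist y A ≠ ⊤ := infEDist_ne_top ⟨x, hx⟩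
  rw [infDist_zero_of_mem hx, edist_dist, dist_comm, Real.dist_eq, sub_zero,
    abs_of_nonneg infDist_nonneg, infDist, ENNReal.ofReal_toReal hne]
  exact setEDist_le_infEDist hy

lemma inter_nonempty_of_measure_univ_sub_le {X : Type*} [MeasurableSpace X] {μ : Measure X}
    [IsFiniteMeasure μ] {C T : Set X} {κ κ' : ℝ≥0∞} (hT : MeasurableSet T)
    (hκκ' : κ' < κ) (hC : κ ≤ μ C) (hμT : μ univ - κ' ≤ μ T) : (C ∩ T).Nonempty := by
  refine nonempty_inter_of_measure_lt_add μ hT (subset_univ C) (subset_univ T) ?_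
  calc μ univ ≤ κ' + (μ univ - κ') := le_add_tsub
    _ < κ + (μ univ - κ') := ENNReal.add_lt_add_right (by finiteness) hκκ'
    _ ≤ μ C + μ T := add_le_add hC hμT

lemma le_partialDiam_map {X Y : Type*} [MeasurableSpace X] [PseudoEMetricSpace Y]
    [MeasurableSpace Y] {μ : Measure X} [IsFiniteMeasure μ] {f : X → Y} (hf : Measurable f)
    {A B : Set X} {κ κ' c : ℝ≥0∞} (hκκ' : κ' < κ) (hA : κ ≤ μ A) (hB : κ ≤ μ B)
    (hc : ∀ x ∈ A, ∀ y ∈ B, c ≤ edist (f x) (f y)) :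
    c ≤ partialDiam (Measure.map f μ) κ' := by
  refine le_iInf₂ fun S hS => le_iInf fun hμS => ?_
  rw [Measure.map_apply hf MeasurableSet.univ, Measure.map_apply hf hS, preimage_univ] at hμS
  obtain ⟨x, hxA, hxS⟩ := inter_nonempty_of_measure_univ_sub_le (hf hS) hκκ' hA hμS
  obtain ⟨y, hyB, hyS⟩ := inter_nonempty_of_measure_univ_sub_le (hf hS) hκκ' hB hμS
  exact (hc x hxA y hyB).trans (edist_le_ediam_of_mem hxS hyS)

theorem stmt_2_general {X : Type*} [MetricSpace X] [MeasurableSpace X] [BorelSpace X]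
    (μ : Measure X) [IsFiniteMeasure μ]
    (κ κ' : ℝ≥0∞) (hκκ' : κ' < κ) :
    sepDist μ κ κ ≤ obsDiam ℝ μ κ' := by
  refine iSup₂_le fun A B => iSup₂_le fun _ _ => iSup₂_le fun hA hB => ?_
  have hf : LipschitzWith 1 (infDist · A) := lipschitz_infDist_pt A
  refine le_iSup₂_of_le _ hf ?_
  exact le_partialDiam_map hf.continuous.measurable hκκ' hA hB
    fun x hx y hy => setEDist_le_edist_infDist hx hy

theorem stmt_2 {X : Type*} [MetricSpace X] [CompleteSpace X]
    [TopologicalSpace.SeparableSpace X] [MeasurableSpace X] [BorelSpace X]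
    (μ : Measure X) [IsFiniteMeasure μ]
    (κ κ' : ℝ≥0∞) (hκ' : 0 < κ') (hκκ' : κ' < κ) :
    sepDist μ κ κ ≤ obsDiam ℝ μ κ' :=
  stmt_2_general μ κ κ' hκκ'
end
end

section
/- Let ν be a finite Borel measure on ℝ with m := ν(ℝ). Then for every κ > 0, diam(ν, m − 2κ) ≤ Sep(ν; κ, κ). In particular, for every mm-space X and every κ > 0, ObsDiam_ℝ(X; −2κ) ≤ Sep(X; κ, κ). -/
open MeasureTheory Metric Set Filter Topology ENNReal

noncomputable section

/-! Let `a` be the lower and `b` the upper `κ`-quantile of `ν`, so that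
`ν (-∞, a) ≤ κ ≤ ν (-∞, a]` and `ν (b, ∞) ≤ κ ≤ ν [b, ∞)`. Then `[a, b]` (empty when `b < a`)
carries mass at least `m - 2κ` and has diameter `(b - a)₊`, while the half-lines `(-∞, a]` and
`[b, ∞)` both carry mass at least `κ` and lie at distance at least `b - a`. (For `κ = 0`,
`Sep` is `∞`: the empty set is admissible.) For an mm-space,
pulling back along a `1`-Lipschitz `f : X → ℝ` does not decrease distances between sets, so
`Sep (f_* μ) ≤ Sep μ`. -/

section MetricMeasure

variable {X : Type*} [PseudoEMetricSpace X]

lemma le_setEDist {A B : Set X} {d : ℝ≥0∞} (h : ∀ x ∈ A, ∀ y ∈ B, d ≤ edist x y) :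
    d ≤ setEDist A B :=
  le_iInf₂ fun x hx => le_iInf₂ fun y hy => h x hx y hy

lemma setEDist_le_edist {A B : Set X} {x y : X} (hx : x ∈ A) (hy : y ∈ B) :
    setEDist A B ≤ edist x y :=
  (iInf₂_le x hx).trans (iInf₂_le y hy)

lemma LipschitzWith.setEDist_le_setEDist_preimage {Y : Type*} [PseudoEMetricSpace Y] {f : X → Y}
    (hf : LipschitzWith 1 f) (A B : Set Y) : setEDist A B ≤ setEDist (f ⁻¹' A) (f ⁻¹' B) :=
  le_setEDist fun x hx y hy =>
    (setEDist_le_edist (x := f x) hx hy).trans <| (hf.edist_le_mul x y).trans_eq (one_mul _)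

variable [MeasurableSpace X] {ν : Measure X}

lemma partialDiam_le {κ : ℝ≥0∞} {A : Set X} (hA : MeasurableSet A) (hνA : ν univ - κ ≤ ν A) :
    partialDiam ν κ ≤ Metric.ediam A :=
  (iInf_le _ A).trans <| (iInf_le _ hA).trans <| iInf_le _ hνA

lemma partialDiam_eq_zero_of_measure_univ_le {κ : ℝ≥0∞} (h : ν univ ≤ κ) :
    partialDiam ν κ = 0 :=
  nonpos_iff_eq_zero.1 <| (partialDiam_le MeasurableSet.empty (by simp [tsub_eq_zero_of_le h])).trans_eq
    Metric.ediam_empty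

lemma setEDist_le_sepDist {κ₁ κ₂ : ℝ≥0∞} {A B : Set X} (hA : MeasurableSet A)
    (hB : MeasurableSet B) (hνA : κ₁ ≤ ν A) (hνB : κ₂ ≤ ν B) :
    setEDist A B ≤ sepDist ν κ₁ κ₂ :=
  le_iSup_of_le A <| le_iSup_of_le B <| le_iSup_of_le hA <| le_iSup_of_le hB <|
    le_iSup_of_le hνA <| le_iSup_of_le hνB le_rfl

lemma sepDist_zero_zero : sepDist ν 0 0 = ⊤ :=
  top_le_iff.1 <| (setEDist_le_sepDist MeasurableSet.empty MeasurableSet.empty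
    zero_le zero_le).trans_eq' (by simp [setEDist])

lemma sepDist_map_le {Y : Type*} [PseudoEMetricSpace Y] [MeasurableSpace Y] {f : X → Y}
    (hf : LipschitzWith 1 f) (hfm : Measurable f) (κ₁ κ₂ : ℝ≥0∞) :
    sepDist (ν.map f) κ₁ κ₂ ≤ sepDist ν κ₁ κ₂ := by
  refine iSup_le fun A => iSup_le fun B => iSup_le fun hA => iSup_le fun hB =>
    iSup_le fun hνA => iSup_le fun hνB => ?_
  rw [Measure.map_apply hfm hA] at hνA
  rw [Measure.map_apply hfm hB] at hνB
  exact (hf.setEDist_le_setEDist_preimage A B).trans <|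
    setEDist_le_sepDist (hfm hA) (hfm hB) hνA hνB

end MetricMeasure

lemma measure_univ_le_Iio_add_Icc_add_Ioi {α : Type*} [LinearOrder α] [MeasurableSpace α]
    (ν : Measure α) (a b : α) : ν univ ≤ ν (Iio a) + ν (Icc a b) + ν (Ioi b) := by
  have hcover : univ ⊆ Iio a ∪ Icc a b ∪ Ioi b := fun x _ => by
    rcases lt_or_ge x a with hxa | hax
    · exact .inl (.inl hxa)
    rcases le_or_gt x b with hxb | hbx
    · exact .inl (.inr ⟨hax, hxb⟩)
    · exact .inr hbx
  exact (measure_mono hcover).trans <|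
    (measure_union_le _ _).trans (add_le_add (measure_union_le _ _) le_rfl)

lemma ofReal_sub_le_setEDist_Iic_Ici (a b : ℝ) :
    ENNReal.ofReal (b - a) ≤ setEDist (Iic a) (Ici b) :=
  le_setEDist fun x (hx : x ≤ a) y (hy : b ≤ y) => by
    rw [edist_dist, Real.dist_eq, abs_sub_comm]
    exact ENNReal.ofReal_le_ofReal <| (by linarith : b - a ≤ y - x).trans (le_abs_self _)

lemma exists_measure_Iio_le_le_measure_Iic (ν : Measure ℝ) [IsFiniteMeasure ν] {κ : ℝ≥0∞}
    (hκ₀ : 0 < κ) (hκ : κ < ν univ) : ∃ a, ν (Iio a) ≤ κ ∧ κ ≤ ν (Iic a) := by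
  set S := {t | κ ≤ ν (Iic t)}
  have hS_ne : S.Nonempty := ((tendsto_measure_Iic_atTop ν).eventually_const_le hκ).exists
  have hS_bdd : BddBelow S := by
    have hlim : Tendsto (fun t => ν (Iic t)) atBot (𝓝 0) := by
      have := tendsto_measure_iInter_atBot (μ := ν) (fun t => measurableSet_Iic.nullMeasurableSet)
        monotone_Iic ⟨0, measure_ne_top ν _⟩
      rwa [iInter_Iic_eq_empty_iff.2 (by simp), measure_empty] at this
    obtain ⟨t₀, ht₀⟩ := eventually_atBot.1 ((tendsto_order.1 hlim).2 κ hκ₀)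
    exact ⟨t₀, fun s hs => not_lt.1 fun hst => (ht₀ s hst.le).not_ge hs⟩
  refine ⟨sInf S, ?_, ?_⟩
  · obtain ⟨u, hu_mono, hu_lt, hu_lim⟩ := exists_seq_strictMono_tendsto (sInf S)
    rw [← iUnion_Iic_eq_Iio_of_lt_of_tendsto hu_lt hu_lim,
      Monotone.measure_iUnion fun m n hmn => Iic_subset_Iic.2 (hu_mono.monotone hmn)]
    exact iSup_le fun n => (not_le.1 fun hn => (hu_lt n).not_ge (csInf_le hS_bdd hn)).le
  · obtain ⟨u, hu_anti, hu_gt, hu_lim⟩ := exists_seq_strictAnti_tendsto (sInf S)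
    have hIic : Iic (sInf S) = ⋂ n, Iic (u n) := by
      ext x
      simp only [mem_Iic, mem_iInter]
      exact ⟨fun hx n => hx.trans (hu_gt n).le, fun hx => ge_of_tendsto' hu_lim hx⟩
    rw [hIic, Antitone.measure_iInter (fun m n hmn => Iic_subset_Iic.2 (hu_anti.antitone hmn))
      (fun _ => measurableSet_Iic.nullMeasurableSet) ⟨0, measure_ne_top ν _⟩]
    refine le_iInf fun n => ?_
    obtain ⟨t, ht, htu⟩ := (csInf_lt_iff hS_bdd hS_ne).1 (hu_gt n)
    exact ht.trans (measure_mono (Iic_subset_Iic.2 htu.le))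

lemma exists_measure_Ioi_le_le_measure_Ici (ν : Measure ℝ) [IsFiniteMeasure ν] {κ : ℝ≥0∞}
    (hκ₀ : 0 < κ) (hκ : κ < ν univ) : ∃ b, ν (Ioi b) ≤ κ ∧ κ ≤ ν (Ici b) := by
  have hneg (s : Set ℝ) (hs : MeasurableSet s) : ν.map Neg.neg s = ν (-s) :=
    Measure.map_apply measurable_neg hs
  obtain ⟨c, hc_lt, hc_le⟩ := exists_measure_Iio_le_le_measure_Iic (ν.map Neg.neg) hκ₀
    (by rwa [hneg _ MeasurableSet.univ, neg_univ])
  rw [hneg _ measurableSet_Iio, neg_Iio] at hc_lt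
  rw [hneg _ measurableSet_Iic, neg_Iic] at hc_le
  exact ⟨-c, hc_lt, hc_le⟩

theorem partialDiam_le_sepDist (ν : Measure ℝ) [IsFiniteMeasure ν] (κ : ℝ≥0∞) :
    partialDiam ν (2 * κ) ≤ sepDist ν κ κ := by
  rcases eq_zero_or_pos κ with rfl | hκ₀
  · simp [sepDist_zero_zero]
  rcases le_or_gt (ν univ) κ with hκ | hκ
  · rw [partialDiam_eq_zero_of_measure_univ_le (hκ.trans (le_mul_of_one_le_left' one_le_two))]
    exact zero_le
  obtain ⟨a, ha_lt, ha_le⟩ := exists_measure_Iio_le_le_measure_Iic ν hκ₀ hκ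
  obtain ⟨b, hb_gt, hb_ge⟩ := exists_measure_Ioi_le_le_measure_Ici ν hκ₀ hκ
  have hIcc : ν univ - 2 * κ ≤ ν (Icc a b) := by
    rw [tsub_le_iff_right, two_mul]
    calc ν univ ≤ ν (Iio a) + ν (Icc a b) + ν (Ioi b) := measure_univ_le_Iio_add_Icc_add_Ioi ν a b
      _ ≤ κ + ν (Icc a b) + κ := by gcongr
      _ = ν (Icc a b) + (κ + κ) := by ring
  calc partialDiam ν (2 * κ) ≤ Metric.ediam (Icc a b) := partialDiam_le measurableSet_Icc hIcc
    _ = ENNReal.ofReal (b - a) := Real.ediam_Icc a b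
    _ ≤ setEDist (Iic a) (Ici b) := ofReal_sub_le_setEDist_Iic_Ici a b
    _ ≤ sepDist ν κ κ := setEDist_le_sepDist measurableSet_Iic measurableSet_Ici ha_le hb_ge

theorem obsDiam_real_le_sepDist {X : Type*} [PseudoEMetricSpace X] [MeasurableSpace X]
    [OpensMeasurableSpace X] (μ : Measure X) [IsFiniteMeasure μ] (κ : ℝ≥0∞) :
    obsDiam ℝ μ (2 * κ) ≤ sepDist μ κ κ :=
  iSup₂_le fun _ hf => (partialDiam_le_sepDist _ κ).trans <|
    sepDist_map_le hf hf.continuous.measurable κ κ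

theorem stmt_3_general (ν : Measure ℝ) [IsFiniteMeasure ν] (κ : ℝ≥0∞) :
    partialDiam ν (2 * κ) ≤ sepDist ν κ κ ∧
    ∀ (X : Type) [MetricSpace X] [CompleteSpace X] [TopologicalSpace.SeparableSpace X]
      [MeasurableSpace X] [BorelSpace X] (μ : Measure X) [IsFiniteMeasure μ],
      obsDiam ℝ μ (2 * κ) ≤ sepDist μ κ κ :=
  ⟨partialDiam_le_sepDist ν κ, fun _ _ _ _ _ _ μ _ => obsDiam_real_le_sepDist μ κ⟩

theorem stmt_3 (ν : Measure ℝ) [IsFiniteMeasure ν] (κ : ℝ≥0∞) (hκ : 0 < κ) :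
    partialDiam ν (2 * κ) ≤ sepDist ν κ κ ∧
    ∀ (X : Type) [MetricSpace X] [CompleteSpace X] [TopologicalSpace.SeparableSpace X]
      [MeasurableSpace X] [BorelSpace X] (μ : Measure X) [IsFiniteMeasure μ],
      obsDiam ℝ μ (2 * κ) ≤ sepDist μ κ κ :=
  stmt_3_general ν κ
end
end

section
/- Let a compact metric group G act continuously on a metric space X, let x ∈ X, and suppose ν_{G,x}(B_X(y, δ)) > 1/2 for some y ∈ X and δ > 0. Then d_X(y, gy) ≤ δ + ρ(δ) for every g ∈ G. Moreover, there exists a point x₀ in the orbit Gx such that d_X(x₀, gx₀) ≤ min{2δ + ρ(2δ), 2δ + 2ρ(δ)} for every g ∈ G. -/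
/-! Let `A` be the set of `g ∈ G` with `g • x ∈ B(y, δ)`. It has Haar measure `> 1/2`, and so has
each left translate `g • A`, so `A` and `g • A` meet: there is `q` in the orbit with `q` and `g • q`
both in `B(y, δ)`. All bounds then follow from the triangle inequality through `g • q`, the point
`x₀` being any orbit point of `B(y, δ)`. -/

open MeasureTheory Metric Set Filter Topology ENNReal

noncomputable section

/-- `ρ(η)` for an action of `G` on `X`: the supremum of `d(gx, gy)` over `g ∈ G` and
`x, y ∈ X` with `d(x,y) ≤ η`. -/
def actRho (G X : Type*) [SMul G X] [PseudoEMetricSpace X] (η : ℝ≥0∞) : ℝ≥0∞ :=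
  ⨆ (g : G) (x : X) (y : X) (_ : edist x y ≤ η), edist (g • x) (g • y)

/-- `ρ(+η) = lim_{η' ↓ η} ρ(η')`. -/
def actRhoPlus (G X : Type*) [SMul G X] [PseudoEMetricSpace X] (η : ℝ≥0∞) : ℝ≥0∞ :=
  ⨅ (η' : ℝ≥0∞) (_ : η < η'), actRho G X η'

/-- `ω_x(η)`: the supremum of `d(gx, g'x)` over `g, g' ∈ G` with `d_G(g,g') ≤ η`. -/
def actOmega (G : Type*) {X : Type*} [PseudoEMetricSpace G] [SMul G X]
    [PseudoEMetricSpace X] (x : X) (η : ℝ≥0∞) : ℝ≥0∞ :=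
  ⨆ (g : G) (g' : G) (_ : edist g g' ≤ η), edist (g • x) (g' • x)

/-- `ω_x(+η) = lim_{η' ↓ η} ω_x(η')`. -/
def actOmegaPlus (G : Type*) {X : Type*} [PseudoEMetricSpace G] [SMul G X]
    [PseudoEMetricSpace X] (x : X) (η : ℝ≥0∞) : ℝ≥0∞ :=
  ⨅ (η' : ℝ≥0∞) (_ : η < η'), actOmega G x η'

section Metric

variable {G X : Type*} [SMul G X] [PseudoEMetricSpace X]

theorem edist_smul_smul_le_actRho (g : G) {a b : X} {η : ℝ≥0∞} (h : edist a b ≤ η) :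
    edist (g • a) (g • b) ≤ actRho G X η :=
  le_iSup₂_of_le g a <| le_iSup₂_of_le b h le_rfl

variable {g : G} {q y z : X} {δ : ℝ≥0∞}

theorem edist_self_smul_le_add_actRho (hq : edist q y ≤ δ) (hgq : edist (g • q) y ≤ δ) :
    edist y (g • y) ≤ δ + actRho G X δ :=
  calc edist y (g • y) ≤ edist y (g • q) + edist (g • q) (g • y) := edist_triangle _ _ _
    _ ≤ δ + actRho G X δ := by
      gcongr
      · rwa [edist_comm]
      · exact edist_smul_smul_le_actRho g hq

theorem edist_self_smul_le_two_mul_add_actRho_two_mul (hz : edist z y ≤ δ) (hq : edist q y ≤ δ)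
    (hgq : edist (g • q) y ≤ δ) : edist z (g • z) ≤ 2 * δ + actRho G X (2 * δ) := by
  have hzgq : edist z (g • q) ≤ 2 * δ :=
    (edist_triangle_right _ _ y).trans (by rw [two_mul]; gcongr)
  have hqz : edist q z ≤ 2 * δ :=
    (edist_triangle_right _ _ y).trans (by rw [two_mul]; gcongr)
  calc edist z (g • z) ≤ edist z (g • q) + edist (g • q) (g • z) := edist_triangle _ _ _
    _ ≤ 2 * δ + actRho G X (2 * δ) := add_le_add hzgq (edist_smul_smul_le_actRho g hqz)

theorem edist_self_smul_le_two_mul_add_two_mul_actRho (hz : edist z y ≤ δ)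
    (hy : edist y (g • y) ≤ δ + actRho G X δ) : edist z (g • z) ≤ 2 * δ + 2 * actRho G X δ :=
  calc edist z (g • z) ≤ edist z y + edist y (g • y) + edist (g • y) (g • z) :=
        edist_triangle4 _ _ _ _
    _ ≤ δ + (δ + actRho G X δ) + actRho G X δ := by
      gcongr
      exact edist_smul_smul_le_actRho g (by rwa [edist_comm])
    _ = 2 * δ + 2 * actRho G X δ := by ring

end Metric

theorem exists_mem_and_inv_mul_mem_of_two_inv_lt {G : Type*} [Group G] [MeasurableSpace G]
    [MeasurableMul G] (μ : Measure G) [IsProbabilityMeasure μ] [μ.IsMulLeftInvariant]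
    {A : Set G} (hA : MeasurableSet A) (hμA : 2⁻¹ < μ A) (g : G) : ∃ k ∈ A, g⁻¹ * k ∈ A :=
  nonempty_inter_of_measure_lt_add' μ hA (subset_univ A) (subset_univ ((g⁻¹ * ·) ⁻¹' A)) <|
    calc μ univ = 2⁻¹ + 2⁻¹ := by rw [measure_univ, ENNReal.inv_two_add_inv_two]
      _ < μ A + μ ((g⁻¹ * ·) ⁻¹' A) := by
        rw [measure_preimage_mul]
        exact ENNReal.add_lt_add hμA hμA

theorem exists_mem_orbit_mem_and_smul_mem_of_two_inv_lt_map {G X : Type*} [Group G]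
    [MeasurableSpace G] [MeasurableMul G] [MeasurableSpace X] [MulAction G X]
    (μ : Measure G) [IsProbabilityMeasure μ] [μ.IsMulLeftInvariant] {x : X}
    (hx : Measurable fun g : G ↦ g • x) {S : Set X} (hS : MeasurableSet S)
    (h : 2⁻¹ < μ.map (· • x) S) (g : G) : ∃ q ∈ MulAction.orbit G x, q ∈ S ∧ g • q ∈ S := by
  rw [Measure.map_apply hx hS] at h
  obtain ⟨k, hk, hgk⟩ := exists_mem_and_inv_mul_mem_of_two_inv_lt μ (hx hS) h g
  refine ⟨(g⁻¹ * k) • x, MulAction.mem_orbit x _, hgk, ?_⟩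
  rwa [smul_smul, mul_inv_cancel_left]

theorem stmt_5_general {G : Type*} [Group G] [MetricSpace G] [IsTopologicalGroup G]
    [MeasurableSpace G] [BorelSpace G]
    {X : Type*} [MetricSpace X] [MeasurableSpace X] [BorelSpace X]
    [MulAction G X] [ContinuousSMul G X]
    (μG : Measure G) [μG.IsHaarMeasure] [IsProbabilityMeasure μG]
    (x y : X) (δ : ℝ≥0∞)
    (h : (2 : ℝ≥0∞)⁻¹ < (Measure.map (· • x) μG) (EMetric.ball y δ)) :
    (∀ g : G, edist y (g • y) ≤ δ + actRho G X δ) ∧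
    ∃ x₀ ∈ MulAction.orbit G x, ∀ g : G,
      edist x₀ (g • x₀) ≤
        min (2 * δ + actRho G X (2 * δ)) (2 * δ + 2 * actRho G X δ) := by
  have hmeet : ∀ g : G, ∃ q ∈ MulAction.orbit G x, edist q y < δ ∧ edist (g • q) y < δ :=
    exists_mem_orbit_mem_and_smul_mem_of_two_inv_lt_map μG
      (continuous_id.smul continuous_const).measurable Metric.isOpen_eball.measurableSet h
  have hy : ∀ g : G, edist y (g • y) ≤ δ + actRho G X δ := fun g ↦ by
    obtain ⟨q, -, hq, hgq⟩ := hmeet g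
    exact edist_self_smul_le_add_actRho hq.le hgq.le
  obtain ⟨x₀, hx₀, hx₀y, -⟩ := hmeet 1
  refine ⟨hy, x₀, hx₀, fun g ↦ le_min ?_ ?_⟩
  · obtain ⟨q, -, hq, hgq⟩ := hmeet g
    exact edist_self_smul_le_two_mul_add_actRho_two_mul hx₀y.le hq.le hgq.le
  · exact edist_self_smul_le_two_mul_add_two_mul_actRho hx₀y.le (hy g)

theorem stmt_5 {G : Type*} [Group G] [MetricSpace G] [CompactSpace G] [IsTopologicalGroup G]
    [MeasurableSpace G] [BorelSpace G]
    {X : Type*} [MetricSpace X] [MeasurableSpace X] [BorelSpace X]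
    [MulAction G X] [ContinuousSMul G X]
    (μG : Measure G) [μG.IsHaarMeasure] [IsProbabilityMeasure μG]
    (x y : X) (δ : ℝ≥0∞) (hδ : 0 < δ)
    (h : (2 : ℝ≥0∞)⁻¹ < (Measure.map (· • x) μG) (EMetric.ball y δ)) :
    (∀ g : G, edist y (g • y) ≤ δ + actRho G X δ) ∧
    ∃ x₀ ∈ MulAction.orbit G x, ∀ g : G,
      edist x₀ (g • x₀) ≤
        min (2 * δ + actRho G X (2 * δ)) (2 * δ + 2 * actRho G X δ) :=
  stmt_5_general μG x y δ h
end
end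

section
/- Let a compact metric group G act continuously on a metric space X and let x ∈ X. Set D := lim_{κ↑1/2} diam(ν_{G,x}, 1 − κ). Then there exists a point z_x in the orbit Gx such that d_X(z_x, g z_x) ≤ D + ρ(+D) for every g ∈ G. -/
open MeasureTheory Metric Set Filter Topology ENNReal

noncomputable section

/-!
For `η > D` choose a Borel set `A ⊆ X` of diameter `< η` whose preimage `B ⊆ G` under the orbit
map has Haar measure `> 1/2`. Given `g ∈ G`, the sets `B` and `g⁻¹B` must meet, in `k` say; then
`kx` and `gkx` both lie in `A`, so every `z ∈ A` satisfies
`d(z, gz) ≤ d(z, gkx) + d(gkx, gz) ≤ η + ρ(η)`. Hence the set of `h ∈ G` such that every `g`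
moves `hx` by at most `η + ρ(η)` is nonempty; it is closed and shrinks as `η ↓ D`, so by
compactness of `G` these sets share a point `h₀`. Then `z = h₀x` works, because
`⨅_{η > D} (η + ρ(η)) = D + ρ(+D)` by monotonicity of `ρ`.
-/

theorem ENNReal.iInf_Ioi_add_of_monotone {f : ℝ≥0∞ → ℝ≥0∞} (hf : Monotone f) (a : ℝ≥0∞) :
    ⨅ η : Ioi a, ((η : ℝ≥0∞) + f η) = a + ⨅ η : Ioi a, f η := by
  have hinf : ⨅ η : Ioi a, (η : ℝ≥0∞) = a := by rw [← sInf_eq_iInf', isGLB_Ioi.sInf_eq]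
  have hdir : ∀ i j : Ioi a, ∃ k : Ioi a, (k : ℝ≥0∞) + f k ≤ i + f j := fun i j =>
    ⟨min i j, add_le_add (min_le_left i j) (hf (min_le_right i j))⟩
  rw [← ENNReal.iInf_add_iInf hdir, hinf]

theorem nonempty_iInter_of_monotone_of_isClosed {X ι : Type*} [TopologicalSpace X]
    [CompactSpace X] [Nonempty X] [Preorder ι] [IsCodirectedOrder ι] {t : ι → Set X}
    (ht : Monotone t) (htn : ∀ i, (t i).Nonempty) (htcl : ∀ i, IsClosed (t i)) :
    (⋂ i, t i).Nonempty := by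
  cases isEmpty_or_nonempty ι
  · simp
  · exact IsCompact.nonempty_iInter_of_directed_nonempty_isCompact_isClosed t
      ht.directed_ge htn (fun i => (htcl i).isCompact) htcl

section ActRho

variable {G X : Type*} [SMul G X] [PseudoEMetricSpace X]

theorem edist_smul_le_actRho {η : ℝ≥0∞} {y z : X} (h : edist y z ≤ η) (g : G) :
    edist (g • y) (g • z) ≤ actRho G X η :=
  le_iSup_of_le g <| le_iSup_of_le y <| le_iSup₂_of_le z h le_rfl

theorem actRho_mono : Monotone (actRho G X) := fun _ _ hab =>
  iSup_le fun g => iSup_le fun _ => iSup₂_le fun _ h => edist_smul_le_actRho (h.trans hab) g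

theorem actRhoPlus_eq_iInf_Ioi (η : ℝ≥0∞) :
    actRhoPlus G X η = ⨅ η' : Ioi η, actRho G X η' :=
  iInf_subtype'

theorem edist_smul_le_ediam_add_actRho {A : Set X} {g : G} {y z : X} (hz : z ∈ A) (hy : y ∈ A)
    (hgy : g • y ∈ A) : edist z (g • z) ≤ ediam A + actRho G X (ediam A) :=
  calc edist z (g • z) ≤ edist z (g • y) + edist (g • y) (g • z) := edist_triangle _ _ _
    _ ≤ ediam A + actRho G X (ediam A) :=
      add_le_add (edist_le_ediam_of_mem hz hgy)
        (edist_smul_le_actRho (edist_le_ediam_of_mem hy hz) g)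

end ActRho

theorem exists_inv_two_lt_measure_of_iInf_partialDiam_lt {Y : Type*} [PseudoEMetricSpace Y]
    [MeasurableSpace Y]
    (ν : Measure Y) [IsProbabilityMeasure ν] {η : ℝ≥0∞}
    (h : ⨅ (κ : ℝ≥0∞) (_ : κ < (2 : ℝ≥0∞)⁻¹), partialDiam ν κ < η) :
    ∃ A, MeasurableSet A ∧ (2 : ℝ≥0∞)⁻¹ < ν A ∧ ediam A < η := by
  simp only [partialDiam, iInf_lt_iff, measure_univ] at h
  obtain ⟨κ, hκ, A, hA, hνA, hdiam⟩ := h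
  refine ⟨A, hA, lt_of_lt_of_le (lt_tsub_iff_right.mpr ?_) hνA, hdiam⟩
  calc 2⁻¹ + κ < 2⁻¹ + 2⁻¹ := by gcongr; simp
    _ = 1 := ENNReal.inv_two_add_inv_two

theorem exists_mem_and_mul_mem_of_inv_two_lt_measure {G : Type*} [Group G] [MeasurableSpace G]
    [MeasurableMul G] (μ : Measure G) [μ.IsMulLeftInvariant] [IsProbabilityMeasure μ]
    {B : Set G} (hB : MeasurableSet B) (hμB : (2 : ℝ≥0∞)⁻¹ < μ B) (g : G) :
    ∃ k ∈ B, g * k ∈ B := by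
  refine nonempty_inter_of_measure_lt_add μ (t := (fun k => g * k) ⁻¹' B)
    (measurable_const_mul g hB) (subset_univ B) (subset_univ _) ?_
  rw [measure_univ, measure_preimage_mul, ← ENNReal.inv_two_add_inv_two]
  exact ENNReal.add_lt_add hμB hμB

theorem exists_forall_edist_smul_le_of_inv_two_lt_measure {G X : Type*} [Group G]
    [MeasurableSpace G] [MeasurableMul G] [MulAction G X] [PseudoEMetricSpace X]
    (μ : Measure G) [μ.IsMulLeftInvariant] [IsProbabilityMeasure μ] (x : X) {A : Set X}
    (hA : MeasurableSet ((fun g : G => g • x) ⁻¹' A))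
    (hμA : (2 : ℝ≥0∞)⁻¹ < μ ((fun g : G => g • x) ⁻¹' A)) :
    ∃ h : G, ∀ g : G, edist (h • x) (g • h • x) ≤ ediam A + actRho G X (ediam A) := by
  obtain ⟨h, hh⟩ := nonempty_of_measure_ne_zero (pos_of_gt hμA).ne'
  refine ⟨h, fun g => ?_⟩
  obtain ⟨k, hk, hgk⟩ := exists_mem_and_mul_mem_of_inv_two_lt_measure μ hA hμA g
  exact edist_smul_le_ediam_add_actRho hh hk (by simpa [mul_smul] using hgk)

theorem stmt_7 {G : Type*} [Group G] [MetricSpace G] [CompactSpace G] [IsTopologicalGroup G]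
    [MeasurableSpace G] [BorelSpace G]
    {X : Type*} [MetricSpace X] [MeasurableSpace X] [BorelSpace X]
    [MulAction G X] [ContinuousSMul G X]
    (μG : Measure G) [μG.IsHaarMeasure] [IsProbabilityMeasure μG]
    (x : X)
    (D : ℝ≥0∞)
    (hD : D = ⨅ (κ : ℝ≥0∞) (_ : κ < (2 : ℝ≥0∞)⁻¹),
      partialDiam (Measure.map (· • x) μG) κ) :
    ∃ z ∈ MulAction.orbit G x, ∀ g : G,
      edist z (g • z) ≤ D + actRhoPlus G X D := by
  have horbit : Measurable (· • x : G → X) := (continuous_id.smul continuous_const).measurable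
  let F : Ioi D → Set G := fun η => {h | ∀ g : G, edist (h • x) (g • h • x) ≤ η + actRho G X η}
  have hF_mono : Monotone F := fun η η' hle h hh g =>
    (hh g).trans (add_le_add hle (actRho_mono hle))
  have hF_closed : ∀ η, IsClosed (F η) := fun η => by
    simp only [F, ofPred_forall]
    exact isClosed_iInter fun g => isClosed_le (by fun_prop) continuous_const
  have hF_nonempty : ∀ η, (F η).Nonempty := by
    rintro ⟨η, hη⟩
    have : IsProbabilityMeasure (μG.map (· • x)) :=
      Measure.isProbabilityMeasure_map horbit.aemeasurable
    obtain ⟨A, hA, hνA, hdiam⟩ := exists_inv_two_lt_measure_of_iInf_partialDiam_lt _ (hD ▸ hη)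
    rw [Measure.map_apply horbit hA] at hνA
    obtain ⟨h, hh⟩ := exists_forall_edist_smul_le_of_inv_two_lt_measure μG x (horbit hA) hνA
    exact ⟨h, fun g => (hh g).trans (add_le_add hdiam.le (actRho_mono hdiam.le))⟩
  obtain ⟨h₀, hh₀⟩ := nonempty_iInter_of_monotone_of_isClosed hF_mono hF_nonempty hF_closed
  refine ⟨h₀ • x, MulAction.mem_orbit _ _, fun g => ?_⟩
  rw [actRhoPlus_eq_iInf_Ioi, ← ENNReal.iInf_Ioi_add_of_monotone actRho_mono]
  exact le_iInf fun η => mem_iInter.1 hh₀ η g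
end
end

section
/- Let {G_n} be a sequence of compact metric groups which is a Lévy family (with respect to their normalized Haar measures), and suppose each G_n acts continuously on a metric space X. Assume there exist a sequence {x_n} of points in X and a function ω : (0, ∞) → [0, ∞] such that lim_{η→0} ω(η) = 0 and ω_{x_n}^{(G_n, X)}(η) ≤ ω(η) for all n ∈ ℕ and η > 0. Then the sequence {(X, d_X, ν_{G_n, x_n})} of mm-spaces is a Lévy family. -/
open MeasureTheory Metric Set Filter Topology ENNReal

noncomputable section

/- For a 1-Lipschitz `f : X → ℝ`, the function `h = f ∘ (· • xₙ)` on `Gₙ` need not be Lipschitz,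
but it has modulus of continuity `ω`. Let `m` be a median of `h`. Testing the observable
diameter of `Gₙ` against the 1-Lipschitz functions `infDist · {h ≤ m}` and `infDist · {h ≥ m}`
shows that the `η`-neighbourhoods of both sets have measure close to `1`, and on their
intersection `|h - m| ≤ ω η`. So `h_* μₙ` is concentrated on an interval of length `2 ω η`. -/

open ProbabilityTheory in
theorem exists_median (ν : Measure ℝ) [IsProbabilityMeasure ν] :
    ∃ m, 1 / 2 ≤ ν (Iic m) ∧ 1 / 2 ≤ ν (Ici m) := by
  set F := cdf ν
  set S := {t | 1 / 2 ≤ F t}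
  have hS : S.Nonempty :=
    ((tendsto_cdf_atTop ν).eventually (eventually_ge_nhds (by norm_num))).exists
  have hbdd : BddBelow S := by
    obtain ⟨b, hb⟩ := ((tendsto_cdf_atBot ν).eventually
      (eventually_lt_nhds (by norm_num : (0 : ℝ) < 1 / 2))).exists_forall_of_atBot
    exact ⟨b, fun t ht => not_lt.1 fun htb => (hb t htb.le).not_ge ht⟩
  have half : ENNReal.ofReal (1 / 2) = 1 / 2 := by
    rw [ENNReal.ofReal_div_of_pos two_pos]; simp
  refine ⟨sInf S, ?_, ?_⟩
  · have hF : 1 / 2 ≤ F (sInf S) := by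
      refine ge_of_tendsto ((F.right_continuous _).mono Ioi_subset_Ici_self) ?_
      filter_upwards [self_mem_nhdsWithin] with t ht
      obtain ⟨s, hs, hst⟩ := exists_lt_of_csInf_lt hS ht
      exact hs.trans (F.mono hst.le)
    rw [← ofReal_cdf, ← half]
    exact ENNReal.ofReal_le_ofReal hF
  · have hF : Function.leftLim F (sInf S) ≤ 1 / 2 := by
      refine le_of_tendsto (F.mono.tendsto_leftLim _) ?_
      filter_upwards [self_mem_nhdsWithin] with t ht
      exact (not_le.1 (notMem_of_lt_csInf (s := S) ht hbdd)).le
    have hIci := (cdf ν).measure_Ici (tendsto_cdf_atTop ν) (sInf S)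
    rw [measure_cdf] at hIci
    rw [hIci, ← half]
    exact ENNReal.ofReal_le_ofReal (by linarith)

theorem partialDiam_anti {X : Type*} [PseudoEMetricSpace X] [MeasurableSpace X] (ν : Measure X) :
    Antitone (partialDiam ν) := fun _ _ hκ =>
  iInf₂_mono fun _ _ => iInf_mono' fun hA => ⟨(tsub_le_tsub_left hκ _).trans hA, le_rfl⟩

theorem partialDiam_le_of_measure_compl_le {X : Type*} [PseudoEMetricSpace X] [MeasurableSpace X]
    {ν : Measure X} {κ : ℝ≥0∞} {S : Set X} (hS : MeasurableSet S) (hνS : ν Sᶜ ≤ κ) :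
    partialDiam ν κ ≤ ediam S :=
  iInf₂_le_of_le S hS <| iInf_le_of_le
    (tsub_le_iff_right.2 <| (measure_univ_le_add_compl S).trans (by gcongr)) le_rfl

theorem exists_measure_compl_preimage_le_of_partialDiam_map_lt {X Y : Type*} [MeasurableSpace X]
    [PseudoEMetricSpace Y] [MeasurableSpace Y] {μ : Measure X} [IsFiniteMeasure μ] {u : X → Y}
    (hu : Measurable u) {κ η : ℝ≥0∞} (h : partialDiam (μ.map u) κ < η) :
    ∃ S, MeasurableSet S ∧ μ (u ⁻¹' S)ᶜ ≤ κ ∧ ediam S < η := by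
  simp only [partialDiam, iInf_lt_iff] at h
  obtain ⟨S, hS, hμS, hdiam⟩ := h
  rw [Measure.map_apply hu .univ, Measure.map_apply hu hS, preimage_univ] at hμS
  refine ⟨S, hS, ?_, hdiam⟩
  rw [measure_compl (hu hS) (measure_ne_top _ _)]
  exact tsub_le_iff_tsub_le.1 hμS

theorem measure_compl_thickening_le_of_obsDiam_lt {X : Type*} [PseudoMetricSpace X]
    [MeasurableSpace X] [OpensMeasurableSpace X] {μ : Measure X} [IsFiniteMeasure μ]
    {κ : ℝ≥0∞} {δ : ℝ} (hobs : obsDiam ℝ μ κ < ENNReal.ofReal δ) {A : Set X} (hA : κ < μ A) :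
    μ (thickening δ A)ᶜ ≤ κ := by
  set u : X → ℝ := fun x => infDist x A
  have hu : LipschitzWith 1 u := lipschitz_infDist_pt A
  obtain ⟨S, hS, hμS, hdiam⟩ := exists_measure_compl_preimage_le_of_partialDiam_map_lt
    hu.continuous.measurable
    ((le_iSup₂ (f := fun f (_ : LipschitzWith 1 f) => partialDiam (μ.map f) κ) u hu).trans_lt hobs)
  obtain ⟨a, ha, haS⟩ : (A ∩ u ⁻¹' S).Nonempty := by
    by_contra! hAS
    refine hA.not_ge ((measure_mono fun a ha haS => ?_).trans hμS)
    exact hAS.subset ⟨ha, haS⟩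
  have h0 : (0 : ℝ) ∈ S := by simpa [u, infDist_zero_of_mem ha] using haS
  refine (measure_mono (compl_subset_compl.2 fun x hx => ?_)).trans hμS
  rw [mem_thickening_iff_infDist_lt ⟨a, ha⟩]
  have hux : ENNReal.ofReal (u x) < ENNReal.ofReal δ := calc
    ENNReal.ofReal (u x) = edist (u x) 0 := by
      rw [edist_dist, Real.dist_0_eq_abs, abs_of_nonneg infDist_nonneg]
    _ ≤ ediam S := edist_le_ediam_of_mem hx h0
    _ < ENNReal.ofReal δ := hdiam
  exact (ENNReal.ofReal_lt_ofReal_iff'.1 hux).1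

theorem partialDiam_map_le_of_obsDiam_lt {X : Type*} [PseudoMetricSpace X] [MeasurableSpace X]
    [OpensMeasurableSpace X] {μ : Measure X} [IsProbabilityMeasure μ] {κ r : ℝ≥0∞} {δ : ℝ}
    (hκ : κ < 1 / 2) (hobs : obsDiam ℝ μ κ < ENNReal.ofReal δ) {h : X → ℝ} (hh : Measurable h)
    (hmod : ∀ x y, dist x y < δ → edist (h x) (h y) ≤ r) :
    partialDiam (μ.map h) (κ + κ) ≤ 2 * r := by
  have := Measure.isProbabilityMeasure_map (μ := μ) hh.aemeasurable
  obtain ⟨m, hlow, hhigh⟩ := exists_median (μ.map h)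
  rw [Measure.map_apply hh measurableSet_Iic] at hlow
  rw [Measure.map_apply hh measurableSet_Ici] at hhigh
  set TA := thickening δ (h ⁻¹' Iic m)
  set TB := thickening δ (h ⁻¹' Ici m)
  have hTA : μ TAᶜ ≤ κ := measure_compl_thickening_le_of_obsDiam_lt hobs (hκ.trans_le hlow)
  have hTB : μ TBᶜ ≤ κ := measure_compl_thickening_le_of_obsDiam_lt hobs (hκ.trans_le hhigh)
  have hsub : TA ∩ TB ⊆ h ⁻¹' closedEBall m r := by
    rintro x ⟨hxA, hxB⟩
    obtain ⟨a, ha, hxa⟩ := mem_thickening_iff.1 hxA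
    obtain ⟨b, hb, hxb⟩ := mem_thickening_iff.1 hxB
    have hm : ∀ y, m ∈ uIcc (h x) (h y) → edist (h x) m ≤ edist (h x) (h y) := fun y hy => by
      simpa only [edist_dist] using ENNReal.ofReal_le_ofReal (Real.dist_left_le_of_mem_uIcc hy)
    rcases le_total (h x) m with hxm | hmx
    · exact (hm b (Set.mem_uIcc.2 (.inl ⟨hxm, hb⟩))).trans (hmod x b hxb)
    · exact (hm a (Set.mem_uIcc.2 (.inr ⟨ha, hmx⟩))).trans (hmod x a hxa)
  calc partialDiam (μ.map h) (κ + κ) ≤ ediam (closedEBall m r) := by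
        refine partialDiam_le_of_measure_compl_le isClosed_closedEBall.measurableSet ?_
        rw [Measure.map_apply hh isClosed_closedEBall.measurableSet.compl, preimage_compl]
        calc μ (h ⁻¹' closedEBall m r)ᶜ ≤ μ (TAᶜ ∪ TBᶜ) := by
              rw [← compl_inter]; exact measure_mono (compl_subset_compl.2 hsub)
          _ ≤ κ + κ := (measure_union_le _ _).trans (add_le_add hTA hTB)
    _ ≤ 2 * r := ediam_closedEBall_le

theorem LipschitzWith.edist_comp_smul_le_actOmega {G X : Type*} [PseudoEMetricSpace G]
    [SMul G X] [PseudoEMetricSpace X] {f : X → ℝ} (hf : LipschitzWith 1 f) (x : X) {g g' : G}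
    {η : ℝ≥0∞} (h : edist g g' ≤ η) : edist (f (g • x)) (f (g' • x)) ≤ actOmega G x η :=
  calc edist (f (g • x)) (f (g' • x)) ≤ edist (g • x) (g' • x) := by simpa using hf (g • x) (g' • x)
    _ ≤ actOmega G x η := le_iSup₂_of_le g g' <| le_iSup_of_le h le_rfl

theorem stmt_9_general (G : ℕ → Type) [∀ n, Group (G n)] [∀ n, MetricSpace (G n)]
    [∀ n, MeasurableSpace (G n)] [∀ n, BorelSpace (G n)]
    (μ : ∀ n, Measure (G n))
    (hprob : ∀ n, IsProbabilityMeasure (μ n))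
    (hLevy : IsLevyFamily G μ)
    {X : Type} [MetricSpace X]
    [MeasurableSpace X] [BorelSpace X]
    [∀ n, MulAction (G n) X] [∀ n, ContinuousSMul (G n) X]
    (x : ℕ → X) (ω : ℝ≥0∞ → ℝ≥0∞)
    (hω0 : Tendsto ω (nhdsWithin 0 (Ioi 0)) (nhds 0))
    (hωbound : ∀ n, ∀ η : ℝ≥0∞, 0 < η → actOmega (G n) (x n) η ≤ ω η) :
    IsLevyFamily (fun _ => X) (fun n => Measure.map (· • x n) (μ n)) := by
  intro κ hκ
  rw [ENNReal.tendsto_atTop_zero]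
  intro ε hε
  have := nhdsGT_neBot_of_exists_gt (⟨1, zero_lt_one⟩ : ∃ b : ℝ≥0∞, 0 < b)
  obtain ⟨η, hωη, hη⟩ : ∃ η, ω η < ε / 2 ∧ η ∈ Ioo 0 1 :=
    (((tendsto_order.1 hω0).2 _ (ENNReal.half_pos hε.ne')).and
      (Ioo_mem_nhdsGT zero_lt_one)).exists
  have hδ : ENNReal.ofReal η.toReal = η := ENNReal.ofReal_toReal (hη.2.trans one_lt_top).ne
  set κ₀ := min (κ / 2) (1 / 4)
  have hκ₀ : κ₀ < 1 / 2 := (min_le_right _ _).trans_lt (by norm_num)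
  have hκ₀κ : κ₀ + κ₀ ≤ κ := (add_le_add (min_le_left _ _) (min_le_left _ _)).trans_eq
    (ENNReal.add_halves κ)
  obtain ⟨N, hN⟩ := eventually_atTop.1 ((tendsto_order.1 (hLevy κ₀
    (lt_min (ENNReal.half_pos hκ.ne') (by norm_num)))).2 η hη.1)
  refine ⟨N, fun n hn => iSup₂_le fun f hf => ?_⟩
  have horbit : Continuous (· • x n : G n → X) := continuous_id.smul continuous_const
  have hmod : ∀ g g' : G n, dist g g' < η.toReal → edist (f (g • x n)) (f (g' • x n)) ≤ ω η :=
    fun g g' hgg' => (hf.edist_comp_smul_le_actOmega (x n)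
      (hδ ▸ (edist_lt_ofReal.2 hgg').le)).trans (hωbound n η hη.1)
  rw [Measure.map_map hf.continuous.measurable horbit.measurable]
  calc partialDiam _ κ ≤ partialDiam _ (κ₀ + κ₀) := partialDiam_anti _ hκ₀κ
    _ ≤ 2 * ω η := partialDiam_map_le_of_obsDiam_lt hκ₀ (hδ.symm ▸ hN n hn)
        (hf.continuous.comp horbit).measurable hmod
    _ ≤ 2 * (ε / 2) := by gcongr
    _ = ε := ENNReal.mul_div_cancel two_ne_zero ofNat_ne_top

theorem stmt_9 (G : ℕ → Type) [∀ n, Group (G n)] [∀ n, MetricSpace (G n)]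
    [∀ n, CompactSpace (G n)] [∀ n, IsTopologicalGroup (G n)]
    [∀ n, MeasurableSpace (G n)] [∀ n, BorelSpace (G n)]
    (μ : ∀ n, Measure (G n)) (hHaar : ∀ n, (μ n).IsHaarMeasure)
    (hprob : ∀ n, IsProbabilityMeasure (μ n))
    (hLevy : IsLevyFamily G μ)
    {X : Type} [MetricSpace X] [CompleteSpace X] [TopologicalSpace.SeparableSpace X]
    [MeasurableSpace X] [BorelSpace X]
    [∀ n, MulAction (G n) X] [∀ n, ContinuousSMul (G n) X]
    (x : ℕ → X) (ω : ℝ≥0∞ → ℝ≥0∞)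
    (hω0 : Tendsto ω (nhdsWithin 0 (Ioi 0)) (nhds 0))
    (hωbound : ∀ n, ∀ η : ℝ≥0∞, 0 < η → actOmega (G n) (x n) η ≤ ω η) :
    IsLevyFamily (fun _ => X) (fun n => Measure.map (· • x n) (μ n)) :=
  stmt_9_general G μ hprob hLevy x ω hω0 hωbound
end
end

section
/- Let ν be a finite Borel measure on the Euclidean space ℝ^k with m := ν(ℝ^k). Then for every κ > 0, diam(ν, m − κ) ≤ √k · max_{1≤i≤k} diam((pr_i)_*(ν), m − κ/k), where pr_i : ℝ^k → ℝ is the projection to the i-th coordinate. -/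
open MeasureTheory Metric Set Filter Topology ENNReal

noncomputable section

/-!
If `A i ⊆ ℝ` carries all but `κ / k` of the `i`-th marginal of `ν`, then by the union bound the
box `∏ i, A i` carries all but `κ` of `ν`, and its diameter for the sup metric is
`max_i diam (A i)`. The Euclidean metric on `ℝ^k` is at most `√k` times the sup metric.
-/

open NNReal

theorem tsub_le_measure_iff_measure_compl_le {X : Type*} [MeasurableSpace X] {ν : Measure X}
    [IsFiniteMeasure ν] {κ : ℝ≥0∞} {A : Set X} (hA : MeasurableSet A) :
    ν univ - κ ≤ ν A ↔ ν Aᶜ ≤ κ := by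
  rw [tsub_le_iff_right, ← measure_add_measure_compl hA,
    ENNReal.add_le_add_iff_left (measure_ne_top ν A)]

section PartialDiam

variable {X : Type*} [PseudoEMetricSpace X] [MeasurableSpace X]

theorem partialDiam_le_ediam {ν : Measure X} {κ : ℝ≥0∞} {A : Set X} (hA : MeasurableSet A)
    (hνA : ν univ - κ ≤ ν A) : partialDiam ν κ ≤ ediam A :=
  iInf₂_le_of_le A hA (iInf_le _ hνA)

theorem exists_ediam_lt_of_partialDiam_lt {ν : Measure X} {κ r : ℝ≥0∞}
    (h : partialDiam ν κ < r) :
    ∃ A, MeasurableSet A ∧ ν univ - κ ≤ ν A ∧ ediam A < r := by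
  simp only [partialDiam, iInf_lt_iff, exists_prop] at h
  exact h

theorem partialDiam_antitone (ν : Measure X) : Antitone (partialDiam ν) :=
  fun _ _ hκ => iInf₂_mono fun _ _ =>
    iInf_mono' fun hνA => ⟨(tsub_le_tsub_left hκ _).trans hνA, le_rfl⟩

theorem partialDiam_le_mul_partialDiam_map {Y : Type*} [PseudoEMetricSpace Y] [MeasurableSpace Y]
    {K : ℝ≥0} {f : X → Y} (hf : AntilipschitzWith K f) (hfm : Measurable f)
    (ν : Measure X) (κ : ℝ≥0∞) : partialDiam ν κ ≤ K * partialDiam (ν.map f) κ := by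
  rcases eq_or_ne K 0 with rfl | hK
  · simpa using (partialDiam_le_ediam MeasurableSet.univ tsub_le_self).trans
      (hf.ediam_preimage_le univ)
  simp only [partialDiam, ENNReal.mul_iInf_of_ne (ENNReal.coe_ne_zero.2 hK) ENNReal.coe_ne_top]
  refine le_iInf₂ fun A hA => le_iInf fun hνA => ?_
  refine (partialDiam_le_ediam (hfm hA) ?_).trans (hf.ediam_preimage_le A)
  rwa [Measure.map_apply hfm hA, Measure.map_apply hfm .univ, preimage_univ] at hνA

end PartialDiam

theorem partialDiam_pi_le {ι : Type*} [Fintype ι] {X : ι → Type*}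
    [∀ i, PseudoEMetricSpace (X i)] [∀ i, MeasurableSpace (X i)]
    (ν : Measure (∀ i, X i)) [IsFiniteMeasure ν] (κ : ι → ℝ≥0∞) :
    partialDiam ν (∑ i, κ i) ≤ ⨆ i, partialDiam (ν.map (Function.eval i)) (κ i) := by
  refine le_of_forall_gt_imp_ge_of_dense fun r hr => ?_
  have hcoord (i : ι) := exists_ediam_lt_of_partialDiam_lt ((le_iSup _ i).trans_lt hr)
  choose A hA hνA hdiam using hcoord
  have hcompl (i : ι) : ν (Function.eval i ⁻¹' (A i)ᶜ) ≤ κ i := by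
    rw [← Measure.map_apply (measurable_pi_apply i) (hA i).compl]
    exact (tsub_le_measure_iff_measure_compl_le (hA i)).1 (hνA i)
  have hpi : ν univ - ∑ i, κ i ≤ ν (pi univ A) := by
    rw [tsub_le_measure_iff_measure_compl_le (.univ_pi hA), univ_pi_eq_iInter, compl_iInter]
    exact (measure_iUnion_fintype_le ν _).trans (Finset.sum_le_sum fun i _ => hcompl i)
  exact (partialDiam_le_ediam (.univ_pi hA) hpi).trans
    (ediam_pi_le_of_le fun i => (hdiam i).le)

theorem stmt_10_general (k : ℕ)
    (ν : Measure (EuclideanSpace ℝ (Fin k))) [IsFiniteMeasure ν]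
    (κ : ℝ≥0∞) :
    partialDiam ν κ ≤ ENNReal.ofReal (Real.sqrt k) *
      ⨆ i : Fin k, partialDiam (Measure.map (fun x => x i) ν) (κ / k) := by
  have hK :
      (((Fintype.card (Fin k) : ℝ≥0) ^ (1 / (2 : ℝ≥0∞)).toReal : ℝ≥0) : ℝ≥0∞) =
        ENNReal.ofReal (Real.sqrt k) := by
    rw [← ENNReal.ofReal_coe_nnreal, NNReal.coe_rpow, Real.sqrt_eq_rpow]
    simp
  have hmap (i : Fin k) : (ν.map (WithLp.ofLp (p := 2))).map (Function.eval i) =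
      ν.map (fun x => x i) :=
    Measure.map_map (measurable_pi_apply i) (WithLp.measurable_ofLp 2 _)
  calc partialDiam ν κ ≤ partialDiam ν (∑ _ : Fin k, κ / k) :=
        partialDiam_antitone ν (by simpa using ENNReal.mul_div_le)
    _ ≤ ENNReal.ofReal (Real.sqrt k) * partialDiam (ν.map WithLp.ofLp) (∑ _ : Fin k, κ / k) :=
        hK ▸ partialDiam_le_mul_partialDiam_map (PiLp.antilipschitzWith_ofLp 2 _)
          (WithLp.measurable_ofLp 2 _) ν _
    _ ≤ ENNReal.ofReal (Real.sqrt k) *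
          ⨆ i : Fin k, partialDiam ((ν.map WithLp.ofLp).map (Function.eval i)) (κ / k) := by
        gcongr
        exact partialDiam_pi_le _ _
    _ = _ := by simp only [hmap]

theorem stmt_10 (k : ℕ) (hk : 0 < k)
    (ν : Measure (EuclideanSpace ℝ (Fin k))) [IsFiniteMeasure ν]
    (κ : ℝ≥0∞) (hκ : 0 < κ) :
    partialDiam ν κ ≤ ENNReal.ofReal (Real.sqrt k) *
      ⨆ i : Fin k, partialDiam (Measure.map (fun x => x i) ν) (κ / k) :=
  stmt_10_general k ν κ
end
end

section
/- Let a compact metric group G act continuously on a compact metric space K, let x ∈ K and δ > 0, and put r_{x,δ} := ω_x(+lim_{κ↑1/(2N_K(δ))} Sep(G; κ, κ)) + 2δ. Then there exists a point z_{x,δ} in the orbit Gx such that d_K(z_{x,δ}, g z_{x,δ}) ≤ r_{x,δ} + ρ(+r_{x,δ}) for every g ∈ G. -/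
open MeasureTheory Metric Set Filter Topology ENNReal

noncomputable section

/-- `N_K(δ)`: the minimum number of Borel subsets of diameter at most `δ` needed
to cover `K`. -/
def coverNum (K : Type*) [PseudoEMetricSpace K] [MeasurableSpace K] (δ : ℝ≥0∞) : ℕ :=
  sInf {n : ℕ | ∃ c : Fin n → Set K,
    (∀ i, MeasurableSet (c i) ∧ EMetric.diam (c i) ≤ δ) ∧ (⋃ i, c i) = univ}

open Pointwise

/-!
Cover `K` by `N = N_K(δ)` Borel sets of diameter at most `δ` and pull them back along the
orbit map `g ↦ g • x`. One pullback `A` has Haar measure at least `1/N`, and so has every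
translate `g • A`; hence `d_G(A, g • A) ≤ Sep(G; κ, κ)` for all `κ < 1/(2N)`.
Put `z = g₀ • x` with `g₀ ∈ A`, and pick `a, b ∈ A` with `d_G(a, g b)` nearly `d_G(A, g • A)`.
Along the chain `z, a • x, g • b • x, g • z` the steps are at most `δ`, `ω_x(d_G(a, g b))`
and `ρ(δ) ≤ ρ(+r)`.
-/

lemma le_sepDist {X : Type*} [PseudoEMetricSpace X] [MeasurableSpace X]
    {ν : Measure X} {κ₁ κ₂ : ℝ≥0∞} {A B : Set X} (hA : MeasurableSet A)
    (hB : MeasurableSet B) (h₁ : κ₁ ≤ ν A) (h₂ : κ₂ ≤ ν B) :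
    setEDist A B ≤ sepDist ν κ₁ κ₂ :=
  le_iSup_of_le A <| le_iSup_of_le B <| le_iSup_of_le hA <| le_iSup_of_le hB <|
    le_iSup_of_le h₁ <| le_iSup_of_le h₂ le_rfl

lemma le_actOmega {G X : Type*} [PseudoEMetricSpace G] [SMul G X] [PseudoEMetricSpace X]
    (x : X) {η : ℝ≥0∞} {g g' : G} (h : edist g g' ≤ η) :
    edist (g • x) (g' • x) ≤ actOmega G x η :=
  le_iSup_of_le g <| le_iSup_of_le g' <| le_iSup_of_le h le_rfl

lemma le_actRho {G X : Type*} [SMul G X] [PseudoEMetricSpace X] (g : G) {η : ℝ≥0∞}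
    {x y : X} (h : edist x y ≤ η) :
    edist (g • x) (g • y) ≤ actRho G X η :=
  le_iSup_of_le g <| le_iSup_of_le x <| le_iSup_of_le y <| le_iSup_of_le h le_rfl

lemma exists_edist_lt_of_setEDist_lt {X : Type*} [PseudoEMetricSpace X] {A B : Set X}
    {η : ℝ≥0∞} (h : setEDist A B < η) : ∃ a ∈ A, ∃ b ∈ B, edist a b < η := by
  simpa only [setEDist, iInf_lt_iff, exists_prop] using h

lemma exists_cover_coverNum (K : Type*) [PseudoEMetricSpace K] [CompactSpace K]
    [MeasurableSpace K] [OpensMeasurableSpace K] {δ : ℝ≥0∞} (hδ : 0 < δ) :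
    ∃ c : Fin (coverNum K δ) → Set K,
      (∀ i, MeasurableSet (c i) ∧ ediam (c i) ≤ δ) ∧ (⋃ i, c i) = univ := by
  suffices h : {n : ℕ | ∃ c : Fin n → Set K,
      (∀ i, MeasurableSet (c i) ∧ ediam (c i) ≤ δ) ∧ (⋃ i, c i) = univ}.Nonempty from
    Nat.sInf_mem h
  obtain ⟨t, -, ht, hcover⟩ :=
    EMetric.totallyBounded_iff'.1 (isCompact_univ (X := K)).totallyBounded
      (δ / 2) (ENNReal.half_pos hδ.ne')
  lift t to Finset K using ht
  refine ⟨t.card, fun i => eball (t.equivFin.symm i) (δ / 2),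
    fun i => ⟨measurableSet_eball, ?_⟩, eq_univ_of_univ_subset (hcover.trans ?_)⟩
  · calc _ ≤ 2 * (δ / 2) := ediam_eball_le
      _ = δ := ENNReal.mul_div_cancel' (by simp) (by simp)
  · intro y hy
    obtain ⟨p, hp, hyp⟩ := mem_iUnion₂.1 hy
    exact mem_iUnion.2 ⟨t.equivFin ⟨p, hp⟩, by simpa using hyp⟩

lemma exists_inv_card_le_measure {α ι : Type*} [MeasurableSpace α] [Fintype ι]
    (μ : Measure α) [IsProbabilityMeasure μ] {A : ι → Set α} (hA : ⋃ i, A i = univ) :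
    ∃ i, (Fintype.card ι : ℝ≥0∞)⁻¹ ≤ μ (A i) := by
  obtain ⟨a⟩ := nonempty_of_isProbabilityMeasure μ
  obtain ⟨i₀, -⟩ := mem_iUnion.1 (hA ▸ mem_univ a)
  have : Nonempty ι := ⟨i₀⟩
  have hsum : ∑ _ : ι, (Fintype.card ι : ℝ≥0∞)⁻¹ ≤ ∑ i, μ (A i) :=
    calc ∑ _ : ι, (Fintype.card ι : ℝ≥0∞)⁻¹ = 1 := by
          rw [Finset.sum_const, Finset.card_univ, nsmul_eq_mul,
            ENNReal.mul_inv_cancel (by simp) (by simp)]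
      _ = μ (⋃ i, A i) := by rw [hA, measure_univ]
      _ ≤ ∑ i, μ (A i) := measure_iUnion_fintype_le μ A
  obtain ⟨i, -, hi⟩ := ENNReal.exists_le_of_sum_le ⟨i₀, Finset.mem_univ _⟩ hsum
  exact ⟨i, hi⟩

lemma setEDist_smul_le_sepDist {G X : Type*} [Group G] [MulAction G X] [PseudoEMetricSpace X]
    [MeasurableSpace X] [MeasurableConstSMul G X] (μ : Measure X) [SMulInvariantMeasure G X μ]
    {A : Set X} (hA : MeasurableSet A) {κ : ℝ≥0∞} (hκ : κ ≤ μ A) (g : G) :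
    setEDist A (g • A) ≤ sepDist μ κ κ :=
  le_sepDist hA (hA.const_smul g) hκ (by rwa [measure_smul])

section OrbitMap

variable {G K : Type*} [Monoid G] [PseudoEMetricSpace G] [PseudoEMetricSpace K] [MulAction G K]
  {x : K} {C : Set K} {d : ℝ≥0∞} {g₀ g : G}

lemma edist_smul_le_of_setEDist_lt {η₁ η₂ : ℝ≥0∞} (hC : ediam C ≤ d) (hd : d ≤ η₂)
    (hg₀ : g₀ • x ∈ C)
    (hsep : setEDist ((· • x : G → K) ⁻¹' C) (g • (· • x : G → K) ⁻¹' C) < η₁) :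
    edist (g₀ • x) (g • g₀ • x) ≤ d + actOmega G x η₁ + actRho G K η₂ := by
  obtain ⟨a, ha, _, ⟨b, hb, rfl⟩, hab⟩ := exists_edist_lt_of_setEDist_lt hsep
  calc edist (g₀ • x) (g • g₀ • x)
      ≤ edist (g₀ • x) (a • x) + edist (a • x) (g • b • x) +
          edist (g • b • x) (g • g₀ • x) :=
        edist_triangle4 _ _ _ _
    _ ≤ d + actOmega G x η₁ + actRho G K η₂ := by
        gcongr
        · exact edist_le_of_ediam_le hg₀ ha hC
        · rw [smul_smul]
          exact le_actOmega x hab.le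
        · exact le_actRho g ((edist_le_of_ediam_le (s := C) hb hg₀ hC).trans hd)

lemma edist_smul_le_of_setEDist_le {s r : ℝ≥0∞} (hC : ediam C ≤ d) (hd : d ≤ r)
    (hg₀ : g₀ • x ∈ C)
    (hsep : setEDist ((· • x : G → K) ⁻¹' C) (g • (· • x : G → K) ⁻¹' C) ≤ s) :
    edist (g₀ • x) (g • g₀ • x) ≤ d + actOmegaPlus G x s + actRhoPlus G K r :=
  calc edist (g₀ • x) (g • g₀ • x)
      ≤ (⨅ (η₁ : ℝ≥0∞) (_ : s < η₁), (d + actOmega G x η₁)) +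
          ⨅ (η₂ : ℝ≥0∞) (_ : r < η₂), actRho G K η₂ :=
        ENNReal.le_iInf₂_add_iInf₂ fun _ h₁ _ h₂ =>
          edist_smul_le_of_setEDist_lt hC (hd.trans h₂.le) hg₀ (hsep.trans_lt h₁)
    _ = d + actOmegaPlus G x s + actRhoPlus G K r := by
        rw [← ENNReal.add_iInf₂]
        rfl

end OrbitMap

theorem stmt_13_general {G : Type*} [Group G] [MetricSpace G] [IsTopologicalGroup G]
    [MeasurableSpace G] [BorelSpace G]
    {K : Type*} [MetricSpace K] [CompactSpace K] [MeasurableSpace K] [BorelSpace K]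
    [MulAction G K] [ContinuousSMul G K]
    (μG : Measure G) [μG.IsHaarMeasure] [IsProbabilityMeasure μG]
    (x : K) (δ : ℝ) (hδ : 0 < δ)
    (r : ℝ≥0∞)
    (hr : r = actOmegaPlus G x
        (⨅ (κ : ℝ≥0∞) (_ : κ < (2 * (coverNum K (ENNReal.ofReal δ) : ℝ≥0∞))⁻¹),
          sepDist μG κ κ) + ENNReal.ofReal (2 * δ)) :
    ∃ z ∈ MulAction.orbit G x, ∀ g : G,
      edist z (g • z) ≤ r + actRhoPlus G K r := by
  set N := coverNum K (ENNReal.ofReal δ)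
  obtain ⟨c, hc, hcov⟩ := exists_cover_coverNum K (ENNReal.ofReal_pos.2 hδ)
  have hcont : Continuous fun g : G => g • x := continuous_id.smul continuous_const
  obtain ⟨i, hi⟩ := exists_inv_card_le_measure μG (A := fun i => (· • x) ⁻¹' c i)
    (by rw [← preimage_iUnion, hcov, preimage_univ])
  rw [Fintype.card_fin] at hi
  have hA : MeasurableSet ((· • x) ⁻¹' c i) := (hc i).1.preimage hcont.measurable
  obtain ⟨g₀, hg₀⟩ := nonempty_of_measure_ne_zero <|
    ne_bot_of_le_ne_bot (ENNReal.inv_ne_zero.2 (ENNReal.natCast_ne_top N)) hi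
  refine ⟨g₀ • x, MulAction.mem_orbit x g₀, fun g => ?_⟩
  have hsep : setEDist ((· • x) ⁻¹' c i) (g • (· • x) ⁻¹' c i) ≤
      ⨅ (κ : ℝ≥0∞) (_ : κ < (2 * (N : ℝ≥0∞))⁻¹), sepDist μG κ κ :=
    le_iInf₂ fun κ hκ => setEDist_smul_le_sepDist μG hA (hκ.le.trans <|
      (ENNReal.inv_le_inv.2 (le_mul_of_one_le_left' one_le_two)).trans hi) g
  have hδr : ENNReal.ofReal δ ≤ r :=
    hr ▸ le_add_left (ENNReal.ofReal_le_ofReal (by linarith))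
  calc edist (g₀ • x) (g • g₀ • x)
      ≤ ENNReal.ofReal δ + actOmegaPlus G x _ + actRhoPlus G K r :=
        edist_smul_le_of_setEDist_le (hc i).2 hδr hg₀ hsep
    _ ≤ r + actRhoPlus G K r := by
        rw [hr, add_comm (ENNReal.ofReal δ)]
        gcongr
        linarith

theorem stmt_13 {G : Type*} [Group G] [MetricSpace G] [CompactSpace G] [IsTopologicalGroup G]
    [MeasurableSpace G] [BorelSpace G]
    {K : Type*} [MetricSpace K] [CompactSpace K] [MeasurableSpace K] [BorelSpace K]
    [MulAction G K] [ContinuousSMul G K]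
    (μG : Measure G) [μG.IsHaarMeasure] [IsProbabilityMeasure μG]
    (x : K) (δ : ℝ) (hδ : 0 < δ)
    (r : ℝ≥0∞)
    (hr : r = actOmegaPlus G x
        (⨅ (κ : ℝ≥0∞) (_ : κ < (2 * (coverNum K (ENNReal.ofReal δ) : ℝ≥0∞))⁻¹),
          sepDist μG κ κ) + ENNReal.ofReal (2 * δ)) :
    ∃ z ∈ MulAction.orbit G x, ∀ g : G,
      edist z (g • z) ≤ r + actRhoPlus G K r :=
  stmt_13_general μG x δ hδ r hr
end
end

section
/- Let (C, d_C) be a circle in ℝ² equipped with its Riemannian (arclength) distance function d_C, and let ν be a finite Borel measure on C with m := ν(C). Then for every κ > 0, diam(ν, m − κ) ≤ (π/√2)·Sep(ν; κ/4, κ/4), where the partial diameter and separation distance are taken with respect to d_C. -/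
open MeasureTheory Metric Set Filter Topology ENNReal

noncomputable section

/-- The Riemannian (arclength) distance on the circle of radius `ρ` about `p` in `ℝ²`:
the length `ρ · ∠ x p y` of the shorter arc joining `x` and `y`. -/
def arcDist (p : EuclideanSpace ℝ (Fin 2)) (ρ : ℝ)
    (x y : Metric.sphere p ρ) : ℝ :=
  ρ * EuclideanGeometry.angle (x : EuclideanSpace ℝ (Fin 2)) p
    (y : EuclideanSpace ℝ (Fin 2))

/-- The diameter of a set with respect to an arbitrary distance function `d`. -/
def diamWith {α : Type*} (d : α → α → ℝ) (A : Set α) : ℝ≥0∞ :=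
  ⨆ (x ∈ A) (y ∈ A), ENNReal.ofReal (d x y)

/-- The partial diameter `diam(ν, ν(α) − κ)` with respect to a distance function `d`. -/
def partialDiamWith {α : Type*} [MeasurableSpace α] (d : α → α → ℝ)
    (ν : Measure α) (κ : ℝ≥0∞) : ℝ≥0∞ :=
  ⨅ (A : Set α) (_ : MeasurableSet A) (_ : ν univ - κ ≤ ν A), diamWith d A

/-- The separation distance `Sep(ν; κ₁, κ₂)` with respect to a distance function `d`. -/
def sepDistWith {α : Type*} [MeasurableSpace α] (d : α → α → ℝ)
    (ν : Measure α) (κ₁ κ₂ : ℝ≥0∞) : ℝ≥0∞ :=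
  ⨆ (A : Set α) (B : Set α) (_ : MeasurableSet A) (_ : MeasurableSet B)
    (_ : κ₁ ≤ ν A) (_ : κ₂ ≤ ν B), ⨅ (x ∈ A) (y ∈ B), ENNReal.ofReal (d x y)

/-!
For each coordinate of `ℝ²` take a lower and an upper `κ/4`-quantile of `ν`. Coordinates are
1-Lipschitz for the arclength distance, so the two half-planes beyond these quantiles, each of mass
at least `κ/4`, are at distance at least the gap between the quantiles: every gap is at most
`Sep(ν; κ/4, κ/4)`. The box cut out by the quantiles misses mass at most `4 · κ/4 = κ`, and on it
the arclength distance is at most `π/2` times the chord, hence at most `(π/2) · √2 · Sep`.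
-/

section Quantile

variable {α : Type*} [MeasurableSpace α] (ν : Measure α) [IsFiniteMeasure ν]

theorem exists_quantile {f : α → ℝ} (hf : Measurable f)
    (hbddBelow : BddBelow (range f)) (hbddAbove : BddAbove (range f)) {κ : ℝ≥0∞}
    (hκ : κ < ν univ) :
    ∃ a, ν {x | f x < a} ≤ κ ∧ κ ≤ ν {x | f x ≤ a} := by
  set S := {t : ℝ | ν {x | f x < t} ≤ κ}
  obtain ⟨lo, hlo⟩ := hbddBelow
  obtain ⟨hi, hhi⟩ := hbddAbove
  have hloS : lo ∈ S := by
    have : {x | f x < lo} = ∅ :=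
      eq_empty_of_forall_notMem fun x hx => (hlo (mem_range_self x)).not_gt hx
    simp [S, this]
  have hhiS : hi ∈ upperBounds S := by
    intro t ht
    by_contra! hlt
    have : {x | f x < t} = univ :=
      eq_univ_of_forall fun x => (hhi (mem_range_self x)).trans_lt hlt
    exact (hκ.trans_le (this ▸ ht)).false
  refine ⟨sSup S, ?_, ?_⟩
  · obtain ⟨u, hu_mono, hu_lim, huS⟩ := exists_seq_tendsto_sSup ⟨lo, hloS⟩ ⟨hi, hhiS⟩
    have hmono : Monotone fun n => {x | f x < u n} :=
      fun m n hmn x hx => lt_of_lt_of_le hx (hu_mono hmn)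
    calc ν {x | f x < sSup S} ≤ ν (⋃ n, {x | f x < u n}) :=
          measure_mono fun x hx => mem_iUnion.2 (hu_lim.eventually (lt_mem_nhds hx)).exists
      _ = ⨆ n, ν {x | f x < u n} := hmono.measure_iUnion
      _ ≤ κ := iSup_le huS
  · obtain ⟨u, hu_anti, hu_gt, hu_lim⟩ := exists_seq_strictAnti_tendsto (sSup S)
    have hanti : Antitone fun n => {x | f x < u n} :=
      fun m n hmn x hx => lt_of_lt_of_le hx (hu_anti.antitone hmn)
    have hu_notMem : ∀ n, u n ∉ S := fun n h => (hu_gt n).not_ge (le_csSup ⟨hi, hhiS⟩ h)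
    calc κ ≤ ⨅ n, ν {x | f x < u n} := le_iInf fun n => (not_le.1 (hu_notMem n)).le
      _ = ν (⋂ n, {x | f x < u n}) :=
          (hanti.measure_iInter (fun n => (measurableSet_lt hf measurable_const).nullMeasurableSet)
            ⟨0, measure_ne_top _ _⟩).symm
      _ ≤ ν {x | f x ≤ sSup S} :=
          measure_mono fun x hx => ge_of_tendsto' hu_lim fun n => (mem_iInter.1 hx n).le

theorem exists_lower_upper_quantile {f : α → ℝ} (hf : Measurable f)
    (hbddBelow : BddBelow (range f)) (hbddAbove : BddAbove (range f)) {κ : ℝ≥0∞}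
    (hκ : κ < ν univ) :
    ∃ a b, ν {x | f x < a} ≤ κ ∧ κ ≤ ν {x | f x ≤ a} ∧
      ν {x | b < f x} ≤ κ ∧ κ ≤ ν {x | b ≤ f x} := by
  obtain ⟨a, ha⟩ := exists_quantile ν hf hbddBelow hbddAbove hκ
  have hneg : Antitone fun t : ℝ => -t := fun _ _ h => neg_le_neg h
  obtain ⟨b, hb⟩ := exists_quantile ν hf.neg
    (range_comp Neg.neg f ▸ hneg.map_bddAbove hbddAbove)
    (range_comp Neg.neg f ▸ hneg.map_bddBelow hbddBelow) hκ
  refine ⟨a, -b, ha.1, ha.2, ?_, ?_⟩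
  · simpa [neg_lt] using hb.1
  · simpa [neg_le] using hb.2

end Quantile

theorem measure_univ_sub_le_measure_box {α ι : Type*} [MeasurableSpace α] [Fintype ι]
    (ν : Measure α) {f : ι → α → ℝ} {a b : ι → ℝ} {κ : ℝ≥0∞}
    (ha : ∀ i, ν {x | f i x < a i} ≤ κ) (hb : ∀ i, ν {x | b i < f i x} ≤ κ) :
    ν univ - 2 * Fintype.card ι * κ ≤ ν {x | ∀ i, f i x ∈ Icc (a i) (b i)} := by
  set box := {x | ∀ i, f i x ∈ Icc (a i) (b i)}
  have hcompl : boxᶜ ⊆ ⋃ i, ({x | f i x < a i} ∪ {x | b i < f i x}) := by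
    intro x hx
    simpa only [box, mem_compl_iff, mem_ofPred_eq, not_forall, mem_Icc, not_and_or, not_le,
      mem_iUnion, mem_union] using hx
  rw [tsub_le_iff_right]
  calc ν univ ≤ ν box + ν boxᶜ := measure_univ_le_add_compl _
    _ ≤ ν box + ∑ _i : ι, (κ + κ) := by
        gcongr
        exact (measure_mono hcompl).trans <| (measure_iUnion_fintype_le _ _).trans <|
          Finset.sum_le_sum fun i _ => (measure_union_le _ _).trans (add_le_add (ha i) (hb i))
    _ = ν box + 2 * Fintype.card ι * κ := by
        rw [Finset.sum_const, Finset.card_univ, nsmul_eq_mul]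
        ring

section

variable {α : Type*} (d : α → α → ℝ)

theorem diamWith_le_ofReal {A : Set α} {c : ℝ} (h : ∀ x ∈ A, ∀ y ∈ A, d x y ≤ c) :
    diamWith d A ≤ ENNReal.ofReal c :=
  iSup₂_le fun x hx => iSup₂_le fun y hy => ENNReal.ofReal_le_ofReal (h x hx y hy)

variable [MeasurableSpace α] {ν : Measure α}

theorem partialDiamWith_le_diamWith {A : Set α} {κ : ℝ≥0∞} (hA : MeasurableSet A)
    (hνA : ν univ - κ ≤ ν A) : partialDiamWith d ν κ ≤ diamWith d A :=
  iInf₂_le_of_le A hA (iInf_le _ hνA)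

theorem ofReal_sub_le_sepDistWith {f : α → ℝ} (hf : Measurable f)
    (hfd : ∀ x y, |f x - f y| ≤ d x y) {a b : ℝ} {κ₁ κ₂ : ℝ≥0∞}
    (ha : κ₁ ≤ ν {x | f x ≤ a}) (hb : κ₂ ≤ ν {x | b ≤ f x}) :
    ENNReal.ofReal (b - a) ≤ sepDistWith d ν κ₁ κ₂ := by
  refine le_iSup₂_of_le _ _ <| le_iSup₂_of_le (measurableSet_le hf measurable_const)
    (measurableSet_le measurable_const hf) <| le_iSup₂_of_le ha hb ?_
  refine le_iInf₂ fun x hx => le_iInf₂ fun y hy => ENNReal.ofReal_le_ofReal ?_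
  linarith [hfd x y, neg_le_abs (f x - f y), show f x ≤ a from hx, show b ≤ f y from hy]

end

theorem partialDiamWith_le_ofReal_mul_sepDistWith {α ι : Type*} [MeasurableSpace α] [Fintype ι]
    (d : α → α → ℝ) (ν : Measure α) [IsFiniteMeasure ν] (f : ι → α → ℝ)
    (hf : ∀ i, Measurable (f i)) (hbddBelow : ∀ i, BddBelow (range (f i)))
    (hbddAbove : ∀ i, BddAbove (range (f i))) (hfd : ∀ i x y, |f i x - f i y| ≤ d x y)
    {C : ℝ} (hC : 0 < C) (hd : ∀ x y s, (∀ i, |f i x - f i y| ≤ s) → d x y ≤ C * s)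
    (κ : ℝ≥0∞) :
    partialDiamWith d ν (2 * Fintype.card ι * κ) ≤ ENNReal.ofReal C * sepDistWith d ν κ κ := by
  rcases le_or_gt (ν univ) (2 * Fintype.card ι * κ) with hm | hm
  · calc partialDiamWith d ν (2 * Fintype.card ι * κ) ≤ diamWith d ∅ :=
          partialDiamWith_le_diamWith d MeasurableSet.empty (by simp [tsub_eq_zero_of_le hm])
      _ = 0 := by simp [diamWith]
      _ ≤ _ := zero_le
  have hκ (i : ι) : κ < ν univ := by
    refine lt_of_le_of_lt (le_mul_of_one_le_left' ?_) hm
    have : (1 : ℝ≥0∞) ≤ Fintype.card ι := by exact_mod_cast Fintype.card_pos_iff.2 ⟨i⟩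
    calc (1 : ℝ≥0∞) ≤ 2 * 1 := by norm_num
      _ ≤ 2 * Fintype.card ι := by gcongr
  choose a b ha_lt ha_le hb_lt hb_le using fun i =>
    exists_lower_upper_quantile ν (hf i) (hbddBelow i) (hbddAbove i) (hκ i)
  have hbox : MeasurableSet {x | ∀ i, f i x ∈ Icc (a i) (b i)} := by
    rw [ofPred_forall]
    exact MeasurableSet.iInter fun i => hf i measurableSet_Icc
  refine (partialDiamWith_le_diamWith d hbox
    (measure_univ_sub_le_measure_box ν ha_lt hb_lt)).trans ?_
  set S := sepDistWith d ν κ κ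
  rcases eq_or_ne S ⊤ with hS | hS
  · simp [hS, ENNReal.mul_top (ENNReal.ofReal_pos.2 hC).ne']
  have hwidth (i : ι) : b i - a i ≤ S.toReal := (ENNReal.ofReal_le_iff_le_toReal hS).1
    (ofReal_sub_le_sepDistWith d (hf i) (hfd i) (ha_le i) (hb_le i))
  rw [← ENNReal.ofReal_toReal hS, ← ENNReal.ofReal_mul hC.le]
  refine diamWith_le_ofReal d fun x hx y hy => hd x y _ fun i => abs_sub_le_iff.2 ⟨?_, ?_⟩
  · linarith [hwidth i, (hx i).2, (hy i).1]
  · linarith [hwidth i, (hx i).1, (hy i).2]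

theorem EuclideanSpace.dist_le_sqrt_card_mul {ι : Type*} [Fintype ι]
    {x y : EuclideanSpace ℝ ι} {s : ℝ} (hs₀ : 0 ≤ s) (hs : ∀ i, |x i - y i| ≤ s) :
    dist x y ≤ √(Fintype.card ι) * s := by
  rw [EuclideanSpace.dist_eq]
  calc √(∑ i, dist (x i) (y i) ^ 2) ≤ √(∑ _i : ι, s ^ 2) :=
        Real.sqrt_le_sqrt <| Finset.sum_le_sum fun i _ =>
          pow_le_pow_left₀ dist_nonneg (Real.dist_eq _ _ ▸ hs i) 2
    _ = √(Fintype.card ι) * s := by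
        rw [Finset.sum_const, Finset.card_univ, nsmul_eq_mul,
          Real.sqrt_mul (Nat.cast_nonneg _), Real.sqrt_sq hs₀]

open EuclideanGeometry in
theorem EuclideanGeometry.dist_eq_two_mul_mul_sin_angle_div_two {V P : Type*}
    [NormedAddCommGroup V] [InnerProductSpace ℝ V] [MetricSpace P] [NormedAddTorsor V P]
    {p x y : P} {ρ : ℝ} (hx : dist x p = ρ) (hy : dist y p = ρ) :
    dist x y = 2 * ρ * Real.sin (∠ x p y / 2) := by
  have hρ : 0 ≤ ρ := hx ▸ dist_nonneg
  have hsin : 0 ≤ Real.sin (∠ x p y / 2) :=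
    Real.sin_nonneg_of_nonneg_of_le_pi (by linarith [angle_nonneg x p y])
      (by linarith [angle_le_pi x p y, Real.pi_pos])
  have hcos : Real.cos (∠ x p y) = 1 - 2 * Real.sin (∠ x p y / 2) ^ 2 := by
    rw [← Real.cos_two_mul_eq_one_sub, mul_div_cancel₀ _ two_ne_zero]
  refine (sq_eq_sq₀ dist_nonneg (by positivity)).1 ?_
  rw [sq, dist_sq_eq_dist_sq_add_dist_sq_sub_two_mul_dist_mul_dist_mul_cos_angle, hx, hy, hcos]
  ring

section Circle

open EuclideanGeometry Real

local notation "ℝ²" => EuclideanSpace ℝ (Fin 2)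

variable {p : ℝ²} {ρ : ℝ}

theorem dist_le_arcDist (x y : sphere p ρ) : dist (x : ℝ²) y ≤ arcDist p ρ x y := by
  have hx : dist (x : ℝ²) p = ρ := Metric.mem_sphere.1 x.2
  have hρ : 0 ≤ ρ := hx ▸ dist_nonneg
  rw [dist_eq_two_mul_mul_sin_angle_div_two hx (Metric.mem_sphere.1 y.2), arcDist]
  calc 2 * ρ * sin (∠ (x : ℝ²) p y / 2) ≤ 2 * ρ * (∠ (x : ℝ²) p y / 2) := by
        gcongr
        exact sin_le (by linarith [angle_nonneg (x : ℝ²) p y])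
    _ = ρ * ∠ (x : ℝ²) p y := by ring

theorem arcDist_le_pi_div_two_mul_dist (x y : sphere p ρ) :
    arcDist p ρ x y ≤ π / 2 * dist (x : ℝ²) y := by
  have hx : dist (x : ℝ²) p = ρ := Metric.mem_sphere.1 x.2
  have hρ : 0 ≤ ρ := hx ▸ dist_nonneg
  rw [dist_eq_two_mul_mul_sin_angle_div_two hx (Metric.mem_sphere.1 y.2), arcDist]
  set θ := ∠ (x : ℝ²) p y
  have hjordan : 2 / π * (θ / 2) ≤ sin (θ / 2) :=
    mul_le_sin (by linarith [angle_nonneg (x : ℝ²) p y])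
      (by linarith [angle_le_pi (x : ℝ²) p y])
  calc ρ * θ = π / 2 * (2 * ρ) * (2 / π * (θ / 2)) := by field_simp
    _ ≤ π / 2 * (2 * ρ) * sin (θ / 2) := by gcongr
    _ = π / 2 * (2 * ρ * sin (θ / 2)) := by ring

theorem abs_sub_apply_le_arcDist (i : Fin 2) (x y : sphere p ρ) :
    |(x : ℝ²) i - (y : ℝ²) i| ≤ arcDist p ρ x y :=
  (PiLp.dist_apply_le (x : ℝ²) y i).trans (dist_le_arcDist x y)

theorem arcDist_le_pi_div_sqrt_two_mul {x y : sphere p ρ} {s : ℝ}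
    (hs : ∀ i, |(x : ℝ²) i - (y : ℝ²) i| ≤ s) : arcDist p ρ x y ≤ π / √2 * s :=
  calc arcDist p ρ x y ≤ π / 2 * dist (x : ℝ²) y := arcDist_le_pi_div_two_mul_dist x y
    _ ≤ π / 2 * (√2 * s) := by
        gcongr
        simpa using EuclideanSpace.dist_le_sqrt_card_mul ((abs_nonneg _).trans (hs 0)) hs
    _ = π / √2 * s := by
        field_simp
        rw [sq_sqrt zero_le_two]

end Circle

theorem stmt_17_general (p : EuclideanSpace ℝ (Fin 2)) (ρ : ℝ)
    (ν : Measure (Metric.sphere p ρ)) [IsFiniteMeasure ν]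
    (κ : ℝ≥0∞) :
    partialDiamWith (arcDist p ρ) ν κ ≤
      ENNReal.ofReal (Real.pi / Real.sqrt 2) *
        sepDistWith (arcDist p ρ) ν (κ / 4) (κ / 4) := by
  have hκ : κ = 2 * Fintype.card (Fin 2) * (κ / 4) := by
    norm_num
    rw [ENNReal.mul_div_cancel (by norm_num) (by norm_num)]
  have hcoord (i : Fin 2) : Continuous fun x : sphere p ρ => (x : EuclideanSpace ℝ (Fin 2)) i :=
    (EuclideanSpace.proj i).continuous.comp continuous_subtype_val
  conv_lhs => rw [hκ]
  exact partialDiamWith_le_ofReal_mul_sepDistWith _ ν _ (fun i => (hcoord i).measurable)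
    (fun i => (isCompact_range (hcoord i)).bddBelow)
    (fun i => (isCompact_range (hcoord i)).bddAbove)
    abs_sub_apply_le_arcDist
    (by positivity) (fun _ _ _ => arcDist_le_pi_div_sqrt_two_mul) (κ / 4)

theorem stmt_17 (p : EuclideanSpace ℝ (Fin 2)) (ρ : ℝ) (hρ : 0 < ρ)
    (ν : Measure (Metric.sphere p ρ)) [IsFiniteMeasure ν]
    (κ : ℝ≥0∞) (hκ : 0 < κ) :
    partialDiamWith (arcDist p ρ) ν κ ≤
      ENNReal.ofReal (Real.pi / Real.sqrt 2) *
        sepDistWith (arcDist p ρ) ν (κ / 4) (κ / 4) :=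
  stmt_17_general p ρ ν κ
end
end
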